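/- The classical Bell numbers B(n) = ∑_{k=0}^{n} S(n,k), where S(n,k) are Stirling numbers of the second kind, satisfy Spivey's identity: B(n+m) = ∑_{r=0}^{n} ∑_{j=0}^{m} C(n,r) · S(m,j) · B(r) · j^{n−r}, with the convention 0^0 = 1. -/

import Mathlib

/-!
Write `P n x = ∑ r, C(n,r) B(r) x^(n-r)` for the umbral power `(B + x)^n`. The Bell recurrence
`B(r+1) = ∑ k, C(r,k) B(k)` says `B^(r+1) = (B + 1)^r`, hence `P (n+1) x = x P n x + P n (x+1)`.
The Stirling recurrence says `∑ j, S(m+1,j) f j = ∑ j, S(m,j) (f (j+1) + j f j)`. Together they show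
that `∑ j, S(m,j) P n j` is unchanged under `(n, m+1) ↦ (n+1, m)`, and at `m = 0` it is `P n 0 = B(n)`.
-/

open Finset

/-- Unsigned Stirling numbers of the first kind. -/
def stirC : ℕ → ℕ → ℕ
  | 0, 0 => 1
  | 0, _ + 1 => 0
  | n + 1, 0 => n * stirC n 0
  | n + 1, k + 1 => stirC n k + n * stirC n (k + 1)

/-- Stirling numbers of the second kind. -/
def stirS : ℕ → ℕ → ℕ
  | 0, 0 => 1
  | 0, _ + 1 => 0
  | _ + 1, 0 => 0
  | n + 1, k + 1 => stirS n k + (k + 1) * stirS n (k + 1)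

/-- The Bell numbers. -/
def Bell (n : ℕ) : ℕ := ∑ k ∈ Finset.range (n + 1), stirS n k

section UmbralPow

variable {R : Type*} [CommSemiring R]

/-- The umbral power `(a + x)^n`, in which `a^r` stands for the term `a r`. -/
def umbralPow (a : ℕ → R) (n : ℕ) (x : R) : R :=
  ∑ r ∈ range (n + 1), (n.choose r : R) * a r * x ^ (n - r)

@[simp]
lemma umbralPow_zero (a : ℕ → R) (x : R) : umbralPow a 0 x = a 0 := by
  simp [umbralPow]

lemma umbralPow_zero_right (a : ℕ → R) (n : ℕ) : umbralPow a n 0 = a n := by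
  rw [umbralPow, sum_range_succ, sum_eq_zero fun r hr => ?_]
  · simp
  · rw [zero_pow (Nat.sub_ne_zero_of_lt (mem_range.mp hr)), mul_zero]

lemma umbralPow_congr {a b : ℕ → R} {n : ℕ} (h : ∀ r ≤ n, a r = b r) (x : R) :
    umbralPow a n x = umbralPow b n x :=
  sum_congr rfl fun r hr => by rw [h r (mem_range_succ_iff.mp hr)]

lemma umbralPow_mul_add (c : R) (a b : ℕ → R) (n : ℕ) (x : R) :
    umbralPow (fun r => c * a r + b r) n x = c * umbralPow a n x + umbralPow b n x := by
  simp only [umbralPow, mul_sum, ← sum_add_distrib]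
  exact sum_congr rfl fun r _ => by ring

lemma umbralPow_sum {ι : Type*} (s : Finset ι) (a : ι → ℕ → R) (n : ℕ) (x : R) :
    umbralPow (fun r => ∑ i ∈ s, a i r) n x = ∑ i ∈ s, umbralPow (a i) n x := by
  simp only [umbralPow, sum_mul, mul_sum]
  exact sum_comm

lemma umbralPow_succ (a : ℕ → R) (n : ℕ) (x : R) :
    umbralPow a (n + 1) x = x * umbralPow a n x + umbralPow (fun r => a (r + 1)) n x := by
  have pascal := sum_choose_succ_mul (fun i j => a i * x ^ j) n
  simp only [← mul_assoc] at pascal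
  rw [umbralPow, pascal, umbralPow, mul_sum]
  congr 1
  refine sum_congr rfl fun r hr => ?_
  rw [Nat.sub_add_comm (mem_range_succ_iff.mp hr), pow_succ]
  ring

/-- The Appell property `(a + x + y)^n = ∑ r, C(n,r) (a + y)^r x^(n-r)`. -/
theorem umbralPow_add (a : ℕ → R) (n : ℕ) (x y : R) :
    umbralPow a n (x + y) = umbralPow (fun r => umbralPow a r y) n x := by
  induction n generalizing a with
  | zero => simp
  | succ n ih =>
    have shift : (fun r => umbralPow a (r + 1) y) =
        fun r => y * umbralPow a r y + umbralPow (fun r => a (r + 1)) r y :=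
      funext fun r => umbralPow_succ a r y
    rw [umbralPow_succ, umbralPow_succ, ih, ih, shift, umbralPow_mul_add]
    ring

end UmbralPow

lemma stirS_succ_succ (n k : ℕ) :
    stirS (n + 1) (k + 1) = stirS n k + (k + 1) * stirS n (k + 1) := rfl

lemma stirS_eq_zero_of_lt : ∀ {n k : ℕ}, n < k → stirS n k = 0
  | 0, _ + 1, _ => rfl
  | n + 1, k + 1, h => by
    rw [stirS_succ_succ, stirS_eq_zero_of_lt (by omega), stirS_eq_zero_of_lt (by omega), mul_zero,
      add_zero]

lemma sum_stirS_succ_mul {R : Type*} [CommSemiring R] (m : ℕ) (f : ℕ → R) :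
    ∑ j ∈ range (m + 2), (stirS (m + 1) j : R) * f j =
      ∑ j ∈ range (m + 1), (stirS m j : R) * (f (j + 1) + j * f j) := by
  set g : ℕ → R := fun j => (j : R) * stirS m j * f j with hg
  have reindex : ∑ j ∈ range (m + 1), g (j + 1) = ∑ j ∈ range (m + 1), g j := by
    have h0 : g 0 = 0 := by simp [hg]
    have hm : g (m + 1) = 0 := by simp [hg, stirS_eq_zero_of_lt (Nat.lt_succ_self m)]
    calc ∑ j ∈ range (m + 1), g (j + 1) = ∑ j ∈ range (m + 1), g (j + 1) + g 0 := by
          rw [h0, add_zero]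
      _ = ∑ j ∈ range (m + 1), g j + g (m + 1) := by rw [← sum_range_succ', sum_range_succ]
      _ = ∑ j ∈ range (m + 1), g j := by rw [hm, add_zero]
  rw [sum_range_succ', show stirS (m + 1) 0 = 0 from rfl, Nat.cast_zero, zero_mul, add_zero]
  calc ∑ j ∈ range (m + 1), (stirS (m + 1) (j + 1) : R) * f (j + 1)
      = ∑ j ∈ range (m + 1), ((stirS m j : R) * f (j + 1) + g (j + 1)) :=
        sum_congr rfl fun j _ => by rw [hg, stirS_succ_succ]; push_cast; ring
    _ = ∑ j ∈ range (m + 1), ((stirS m j : R) * f (j + 1) + g j) := by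
        rw [sum_add_distrib, sum_add_distrib, reindex]
    _ = ∑ j ∈ range (m + 1), (stirS m j : R) * (f (j + 1) + j * f j) :=
        sum_congr rfl fun j _ => by rw [hg]; ring

lemma stirS_succ_succ_eq_umbralPow (n k : ℕ) :
    stirS (n + 1) (k + 1) = umbralPow (fun j => stirS j k) n 1 := by
  induction n generalizing k with
  | zero => simp [stirS]
  | succ n ih =>
    rw [umbralPow_succ]
    cases k with
    | zero =>
      rw [← ih, stirS_succ_succ (n + 1)]
      simp [stirS, umbralPow]
    | succ k =>
      have column : (fun j => stirS (j + 1) (k + 1)) =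
          fun j => (k + 1) * stirS j (k + 1) + stirS j k :=
        funext fun j => by rw [stirS_succ_succ, add_comm]
      rw [column, umbralPow_mul_add, ← ih, ← ih, stirS_succ_succ (n + 1)]
      ring

lemma bell_eq_sum_range_of_le {n N : ℕ} (h : n ≤ N) :
    Bell n = ∑ k ∈ range (N + 1), stirS n k :=
  sum_subset (range_subset_range.mpr (by omega)) fun k _ hk =>
    stirS_eq_zero_of_lt (by simpa using hk)

lemma bell_succ_eq_umbralPow (n : ℕ) : Bell (n + 1) = umbralPow Bell n 1 := by
  rw [Bell, sum_range_succ', show stirS (n + 1) 0 = 0 from rfl, add_zero]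
  simp only [stirS_succ_succ_eq_umbralPow]
  rw [← umbralPow_sum]
  exact umbralPow_congr (fun r hr => (bell_eq_sum_range_of_le hr).symm) 1

lemma umbralPow_bell_succ (n x : ℕ) :
    umbralPow Bell (n + 1) x = x * umbralPow Bell n x + umbralPow Bell n (x + 1) := by
  rw [umbralPow_succ, umbralPow_add]
  simp only [bell_succ_eq_umbralPow]

theorem bell_add_eq_sum_stirS_mul_umbralPow (n m : ℕ) :
    Bell (n + m) = ∑ j ∈ range (m + 1), stirS m j * umbralPow Bell n j := by
  induction m generalizing n with
  | zero => simp [stirS, umbralPow_zero_right]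
  | succ m ih =>
    have stirling := sum_stirS_succ_mul m fun j => umbralPow Bell n j
    simp only [Nat.cast_id] at stirling
    rw [stirling, ← add_assoc, add_right_comm, ih (n + 1)]
    refine sum_congr rfl fun j _ => ?_
    rw [umbralPow_bell_succ, add_comm]

theorem stmt_19 (n m : ℕ) :
    Bell (n + m) =
      ∑ r ∈ Finset.range (n + 1), ∑ j ∈ Finset.range (m + 1),
        Nat.choose n r * stirS m j * Bell r * j ^ (n - r) := by
  rw [bell_add_eq_sum_stirS_mul_umbralPow, sum_comm]
  refine sum_congr rfl fun j _ => ?_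
  rw [umbralPow, mul_sum]
  refine sum_congr rfl fun r _ => ?_
  rw [Nat.cast_id]
  ring
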